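/- Let θ ≥ 1 and F ≥ 2θ + 2 be integers, and let η, η′ be independent random variables each uniformly distributed on {1, …, F}. Set ξ := η′ − η and define φ := −|ξ| if |ξ| ≤ θ and φ := |ξ| − 2θ if |ξ| > θ. Then E φ = (1/(3F²)) (−6(F − θ)θ² + (F − 2θ − 1)(F − 2θ)(F − 2θ + 1)). -/

import Mathlib

/-!
By independence the expectation is `F⁻²` times the sum of `φ(|j - i|)` over the grid
`{1, …, F}²`. Passing from the `n × n` to the `(n + 1) × (n + 1)` grid adds a row and a column
whose distances each run once through `1, …, n`, plus the corner at distance `0`; so both the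
grid sum and the row sums `∑_{k ≤ n} φ(k)` obey one-step recursions, and induction on `F`,
starting at `F = θ` where no distance exceeds `θ`, produces the cubic.
-/

open MeasureTheory ProbabilityTheory Finset

/-- The weight `φ` of the statement, as a function of the distance `d = |ξ|`. -/
def edgeWeight (θ : ℕ) (d : ℤ) : ℝ :=
  if d ≤ (θ : ℤ) then -(d : ℝ) else (d : ℝ) - 2 * θ

lemma sum_Icc_abs_succ_sub {M : Type*} [AddCommMonoid M] (f : ℤ → M) (n : ℕ) :
    ∑ i ∈ Icc 1 n, f |((n + 1 : ℕ) : ℤ) - i| = ∑ k ∈ Icc 1 n, f k := by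
  refine sum_nbij' (fun i ↦ n + 1 - i) (fun k ↦ n + 1 - k) ?_ ?_ ?_ ?_ ?_ <;>
    simp only [mem_Icc] <;> try omega
  intro i hi
  rw [abs_of_nonneg (by omega)]
  push_cast [Nat.cast_sub (by omega : i ≤ n + 1)]
  ring_nf

lemma sum_Icc_sum_Icc_abs_sub_succ {M : Type*} [AddCommMonoid M] (f : ℤ → M) (n : ℕ) :
    ∑ i ∈ Icc 1 (n + 1), ∑ j ∈ Icc 1 (n + 1), f |(j : ℤ) - i|
      = ∑ i ∈ Icc 1 n, ∑ j ∈ Icc 1 n, f |(j : ℤ) - i|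
          + (2 • ∑ k ∈ Icc 1 n, f k + f 0) := by
  simp_rw [sum_Icc_succ_top (Nat.le_add_left 1 n), sum_add_distrib, sum_Icc_abs_succ_sub,
    abs_sub_comm (_ : ℤ) ((n + 1 : ℕ) : ℤ), sum_Icc_abs_succ_sub, sub_self, abs_zero,
    two_nsmul]
  abel

section EdgeWeight

variable {θ n : ℕ}

lemma edgeWeight_zero : edgeWeight θ 0 = 0 := by
  simp [edgeWeight]

lemma two_mul_sum_edgeWeight_of_le (h : n ≤ θ) :
    2 * ∑ k ∈ Icc 1 n, edgeWeight θ k = -((n : ℝ) * (n + 1)) := by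
  induction n with
  | zero => simp
  | succ n ih =>
    rw [sum_Icc_succ_top (by omega), mul_add, ih (by omega), edgeWeight, if_pos (by omega)]
    push_cast
    ring

lemma two_mul_sum_edgeWeight_of_ge (h : θ ≤ n) :
    2 * ∑ k ∈ Icc 1 n, edgeWeight θ k
      = -((θ : ℝ) * (θ + 1)) + ((n : ℝ) - θ) * (n - 3 * θ + 1) := by
  induction n, h using Nat.le_induction with
  | base => rw [two_mul_sum_edgeWeight_of_le le_rfl]; ring
  | succ n hn ih =>
    rw [sum_Icc_succ_top (by omega), mul_add, ih, edgeWeight, if_neg (by omega)]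
    push_cast
    ring

lemma three_mul_sum_sum_edgeWeight_of_le (h : n ≤ θ) :
    3 * ∑ i ∈ Icc 1 n, ∑ j ∈ Icc 1 n, edgeWeight θ |(j : ℤ) - i|
      = (n : ℝ) - n ^ 3 := by
  induction n with
  | zero => simp
  | succ n ih =>
    rw [sum_Icc_sum_Icc_abs_sub_succ, edgeWeight_zero, two_nsmul]
    push_cast
    linear_combination
      ih (by omega) + 3 * two_mul_sum_edgeWeight_of_le (θ := θ) (n := n) (by omega)

lemma three_mul_sum_sum_edgeWeight_of_ge (h : θ ≤ n) :
    3 * ∑ i ∈ Icc 1 n, ∑ j ∈ Icc 1 n, edgeWeight θ |(j : ℤ) - i|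
      = -6 * ((n : ℝ) - θ) * θ ^ 2
          + ((n : ℝ) - 2 * θ - 1) * (n - 2 * θ) * (n - 2 * θ + 1) := by
  induction n, h using Nat.le_induction with
  | base => rw [three_mul_sum_sum_edgeWeight_of_le le_rfl]; ring
  | succ n hn ih =>
    rw [sum_Icc_sum_Icc_abs_sub_succ, edgeWeight_zero, two_nsmul]
    push_cast
    linear_combination ih + 3 * two_mul_sum_edgeWeight_of_ge hn

end EdgeWeight

section Integral

variable {Ω : Type*} [MeasurableSpace Ω] {μ : Measure Ω}

lemma integral_comp_eq_sum_of_forall_mem {α E : Type*} [MeasurableSpace α]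
    [MeasurableSingletonClass α] [NormedAddCommGroup E] [NormedSpace ℝ E] [CompleteSpace E]
    [IsFiniteMeasure μ] {Z : Ω → α} (hZ : Measurable Z) {s : Finset α}
    (hs : ∀ ω, Z ω ∈ s) (g : α → E) :
    ∫ ω, g (Z ω) ∂μ = ∑ z ∈ s, μ.real (Z ⁻¹' {z}) • g z := by
  have hmeas (z : α) : MeasurableSet (Z ⁻¹' {z}) := hZ (measurableSet_singleton z)
  calc ∫ ω, g (Z ω) ∂μ
      = ∫ ω, ∑ z ∈ s, (Z ⁻¹' {z}).indicator (fun _ ↦ g z) ω ∂μ := by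
        congr with ω
        classical
        simp [Set.indicator, hs ω]
    _ = ∑ z ∈ s, μ.real (Z ⁻¹' {z}) • g z := by
        rw [integral_finsetSum s fun z _ ↦ (integrable_const _).indicator (hmeas z)]
        exact sum_congr rfl fun z _ ↦ integral_indicator_const _ (hmeas z)

lemma ProbabilityTheory.IndepFun.integral_comp₂_eq_sum_of_forall_mem {α β : Type*}
    [MeasurableSpace α] [MeasurableSingletonClass α]
    [MeasurableSpace β] [MeasurableSingletonClass β]
    [IsFiniteMeasure μ] {X : Ω → α} {Y : Ω → β} (hXY : IndepFun X Y μ)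
    (hX : Measurable X) (hY : Measurable Y) {s : Finset α} {t : Finset β}
    (hs : ∀ ω, X ω ∈ s) (ht : ∀ ω, Y ω ∈ t) (g : α → β → ℝ) :
    ∫ ω, g (X ω) (Y ω) ∂μ
      = ∑ i ∈ s, ∑ j ∈ t, μ.real (X ⁻¹' {i}) * μ.real (Y ⁻¹' {j}) * g i j := by
  rw [integral_comp_eq_sum_of_forall_mem (hX.prodMk hY) (s := s ×ˢ t)
    (fun ω ↦ mem_product.2 ⟨hs ω, ht ω⟩) (fun p ↦ g p.1 p.2), sum_product]
  refine sum_congr rfl fun i _ ↦ sum_congr rfl fun j _ ↦ ?_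
  rw [smul_eq_mul, measureReal_def, measureReal_def, measureReal_def, ← ENNReal.toReal_mul,
    ← hXY.measure_inter_preimage_eq_mul _ _ (measurableSet_singleton i)
      (measurableSet_singleton j),
    ← Set.mk_preimage_prod, Set.singleton_prod_singleton]

end Integral

theorem expected_weight_uniform_eq_general
    {Ω : Type*} [MeasurableSpace Ω] (μ : Measure Ω) [IsProbabilityMeasure μ]
    (θ F : ℕ) (hF : 2 * θ + 2 ≤ F)
    (η η' : Ω → ℕ)
    (hmη : Measurable η) (hmη' : Measurable η')
    (hval : ∀ ω, η ω ∈ Finset.Icc 1 F) (hval' : ∀ ω, η' ω ∈ Finset.Icc 1 F)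
    (hindep : IndepFun η η' μ)
    (hdist : ∀ i ∈ Finset.Icc 1 F, μ {ω | η ω = i} = ENNReal.ofReal (1 / F))
    (hdist' : ∀ i ∈ Finset.Icc 1 F, μ {ω | η' ω = i} = ENNReal.ofReal (1 / F)) :
    (∫ ω, (if |(η' ω : ℤ) - (η ω : ℤ)| ≤ (θ : ℤ)
        then -((|(η' ω : ℤ) - (η ω : ℤ)| : ℤ) : ℝ)
        else ((|(η' ω : ℤ) - (η ω : ℤ)| : ℤ) : ℝ) - 2 * θ) ∂μ)
      = (1 / (3 * (F : ℝ) ^ 2))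
          * (-6 * ((F : ℝ) - θ) * θ ^ 2
              + ((F : ℝ) - 2 * θ - 1) * ((F : ℝ) - 2 * θ) * ((F : ℝ) - 2 * θ + 1)) := by
  have measureReal_preimage_singleton {X : Ω → ℕ}
      (hX : ∀ i ∈ Icc 1 F, μ {ω | X ω = i} = ENNReal.ofReal (1 / F))
      (i : ℕ) (hi : i ∈ Icc 1 F) : μ.real (X ⁻¹' {i}) = 1 / F := by
    rw [measureReal_def, show X ⁻¹' {i} = {ω | X ω = i} from rfl, hX i hi,
      ENNReal.toReal_ofReal (by positivity)]
  calc _ = ∫ ω, edgeWeight θ |(η' ω : ℤ) - η ω| ∂μ := rfl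
    _ = ∑ i ∈ Icc 1 F, ∑ j ∈ Icc 1 F,
          μ.real (η ⁻¹' {i}) * μ.real (η' ⁻¹' {j}) * edgeWeight θ |(j : ℤ) - i| :=
      hindep.integral_comp₂_eq_sum_of_forall_mem hmη hmη' hval hval'
        (fun i j ↦ edgeWeight θ |(j : ℤ) - i|)
    _ = ∑ i ∈ Icc 1 F, ∑ j ∈ Icc 1 F,
          1 / (3 * (F : ℝ) ^ 2) * 3 * edgeWeight θ |(j : ℤ) - i| :=
      sum_congr rfl fun i hi ↦ sum_congr rfl fun j hj ↦ by
        rw [measureReal_preimage_singleton hdist i hi,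
          measureReal_preimage_singleton hdist' j hj]
        ring
    _ = _ := by
      simp only [mul_assoc, ← mul_sum]
      rw [three_mul_sum_sum_edgeWeight_of_ge (by omega)]
      ring

/-- Expected value of the edge weight `φ` for the constrained voter model with `F` opinions
and confidence threshold `θ` in the uniform case: if the two endpoints are independent and
uniform on `{1, ..., F}`, then
`E φ = (1/(3F²)) (-6(F-θ)θ² + (F-2θ-1)(F-2θ)(F-2θ+1))`. -/
theorem expected_weight_uniform_eq
    {Ω : Type*} [MeasurableSpace Ω] (μ : Measure Ω) [IsProbabilityMeasure μ]
    (θ F : ℕ) (hθ : 1 ≤ θ) (hF : 2 * θ + 2 ≤ F)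
    (η η' : Ω → ℕ)
    (hmη : Measurable η) (hmη' : Measurable η')
    (hval : ∀ ω, η ω ∈ Finset.Icc 1 F) (hval' : ∀ ω, η' ω ∈ Finset.Icc 1 F)
    (hindep : IndepFun η η' μ)
    (hdist : ∀ i ∈ Finset.Icc 1 F, μ {ω | η ω = i} = ENNReal.ofReal (1 / F))
    (hdist' : ∀ i ∈ Finset.Icc 1 F, μ {ω | η' ω = i} = ENNReal.ofReal (1 / F)) :
    (∫ ω, (if |(η' ω : ℤ) - (η ω : ℤ)| ≤ (θ : ℤ)
        then -((|(η' ω : ℤ) - (η ω : ℤ)| : ℤ) : ℝ)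
        else ((|(η' ω : ℤ) - (η ω : ℤ)| : ℤ) : ℝ) - 2 * θ) ∂μ)
      = (1 / (3 * (F : ℝ) ^ 2))
          * (-6 * ((F : ℝ) - θ) * θ ^ 2
              + ((F : ℝ) - 2 * θ - 1) * ((F : ℝ) - 2 * θ) * ((F : ℝ) - 2 * θ + 1)) :=
  expected_weight_uniform_eq_general μ θ F hF η η' hmη hmη' hval hval' hindep hdist hdist'
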